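/- arXiv:1208.0398 — 7 statements merged into one kernel-verified Lean document; each statement's English description precedes it below -/
import Mathlib

section
/- If H is a prime tournament and X is a nonempty homogeneous set of a tournament G, then G is H-free if and only if both G/X and G[X] are H-free, where G/X denotes the subtournament of G induced on (V(G)\X) ∪ {v} for any fixed v ∈ X. -/
/-- A tournament: irreflexive, and between any two distinct vertices exactly one edge. -/
def IsTournament {V : Type*} (r : V → V → Prop) : Prop :=
  (∀ v, ¬ r v v) ∧ ∀ u v : V, u ≠ v → (r u v ↔ ¬ r v u)

/-- A homogeneous set. -/
def IsHomog {V : Type*} (r : V → V → Prop) (X : Set V) : Prop :=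
  ∀ v ∉ X, (∀ x ∈ X, r v x) ∨ (∀ x ∈ X, r x v)

/-- A prime tournament: every homogeneous set is trivial. -/
def IsPrime {V : Type*} (r : V → V → Prop) : Prop :=
  ∀ X : Set V, IsHomog r X → X.Subsingleton ∨ X = Set.univ

/-- A set of vertices is transitive: it induces no cyclic triangle. -/
def IsTransOn {V : Type*} (r : V → V → Prop) (X : Set V) : Prop :=
  ∀ a ∈ X, ∀ b ∈ X, ∀ c ∈ X, ¬ (r a b ∧ r b c ∧ r c a)

/-- `G` has a copy of `H` inside the vertex set `S`. -/
def CopyIn {V W : Type*} (r : V → V → Prop) (s : W → W → Prop) (S : Set V) : Prop :=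
  ∃ f : W → V, (∀ a, f a ∈ S) ∧ Function.Injective f ∧ ∀ a b, s a b → r (f a) (f b)

/-! The preimage of `X` under a copy of `H` in `G` is homogeneous in `H`, so by primality the copy
meets `X` in at most one vertex or lies inside `X`. In the first case, moving its vertex in `X`
(if any) to `v` yields a copy of `H` in `G/X`, because every vertex outside `X` sees `v` as it sees
all of `X`. -/

namespace IsTournament

variable {V : Type*} {r : V → V → Prop}

theorem ne_of_rel (hr : IsTournament r) {a b : V} (h : r a b) : a ≠ b := by
  rintro rfl
  exact hr.1 a h

theorem asymm (hr : IsTournament r) {a b : V} (h : r a b) : ¬ r b a :=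
  (hr.2 a b (hr.ne_of_rel h)).mp h

theorem rel_of_not_rel (hr : IsTournament r) {a b : V} (hab : a ≠ b) (h : ¬ r b a) : r a b :=
  (hr.2 a b hab).mpr h

end IsTournament

theorem CopyIn.mono {V W : Type*} {r : V → V → Prop} {s : W → W → Prop} {S T : Set V}
    (hST : S ⊆ T) : CopyIn r s S → CopyIn r s T
  | ⟨f, hfS, hf_inj, hf⟩ => ⟨f, fun a => hST (hfS a), hf_inj, hf⟩

theorem IsHomog.preimage {V W : Type*} {r : V → V → Prop} {s : W → W → Prop} {X : Set V}
    (hr : IsTournament r) (hs : IsTournament s) (hX : IsHomog r X) {f : W → V}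
    (hf : ∀ a b, s a b → r (f a) (f b)) : IsHomog s (f ⁻¹' X) := by
  intro w hw
  have hne : ∀ a ∈ f ⁻¹' X, w ≠ a := fun a ha h => hw (h ▸ ha)
  rcases hX (f w) hw with hwX | hXw
  · exact Or.inl fun a ha =>
      hs.rel_of_not_rel (hne a ha) fun h => hr.asymm (hwX _ ha) (hf a w h)
  · exact Or.inr fun a ha =>
      hs.rel_of_not_rel (hne a ha).symm fun h => hr.asymm (hXw _ ha) (hf w a h)

section ContractTo

variable {V : Type*} {X : Set V} {v u w : V}

open Classical in
noncomputable def contractTo (X : Set V) (v u : V) : V := if u ∈ X then v else u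

theorem contractTo_of_mem (hu : u ∈ X) : contractTo X v u = v := if_pos hu

theorem contractTo_of_notMem (hu : u ∉ X) : contractTo X v u = u := if_neg hu

theorem contractTo_mem_quotient : contractTo X v u ∈ (Set.univ \ X) ∪ {v} := by
  by_cases hu : u ∈ X
  · exact Or.inr (contractTo_of_mem hu)
  · exact Or.inl ⟨trivial, by rwa [contractTo_of_notMem hu]⟩

theorem eq_of_contractTo_eq (hv : v ∈ X) (h : ¬ (u ∈ X ∧ w ∈ X))
    (huw : contractTo X v u = contractTo X v w) : u = w := by
  by_cases hu : u ∈ X <;> by_cases hw : w ∈ X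
  · exact absurd ⟨hu, hw⟩ h
  · rw [contractTo_of_mem hu, contractTo_of_notMem hw] at huw
    exact absurd (huw ▸ hv) hw
  · rw [contractTo_of_notMem hu, contractTo_of_mem hw] at huw
    exact absurd (huw ▸ hv) hu
  · rwa [contractTo_of_notMem hu, contractTo_of_notMem hw] at huw

theorem IsHomog.rel_contractTo {r : V → V → Prop} (hr : IsTournament r) (hX : IsHomog r X)
    (hv : v ∈ X) (h : ¬ (u ∈ X ∧ w ∈ X)) (huw : r u w) :
    r (contractTo X v u) (contractTo X v w) := by
  by_cases hu : u ∈ X <;> by_cases hw : w ∈ X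
  · exact absurd ⟨hu, hw⟩ h
  · rw [contractTo_of_mem hu, contractTo_of_notMem hw]
    exact (hX w hw).resolve_left (fun hwX => hr.asymm huw (hwX u hu)) v hv
  · rw [contractTo_of_notMem hu, contractTo_of_mem hw]
    exact (hX u hu).resolve_right (fun hXu => hr.asymm huw (hXu w hw)) v hv
  · rwa [contractTo_of_notMem hu, contractTo_of_notMem hw]

theorem copyIn_quotient_of_subsingleton_preimage {W : Type*} {r : V → V → Prop}
    {s : W → W → Prop} (hr : IsTournament r) (hs : IsTournament s) (hX : IsHomog r X)
    (hv : v ∈ X) {f : W → V} (hf_inj : Function.Injective f) (hf : ∀ a b, s a b → r (f a) (f b))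
    (hfX : (f ⁻¹' X).Subsingleton) : CopyIn r s ((Set.univ \ X) ∪ {v}) := by
  have not_both : ∀ a b, a ≠ b → ¬ (f a ∈ X ∧ f b ∈ X) := fun a b hab h => hab (hfX h.1 h.2)
  refine ⟨contractTo X v ∘ f, fun _ => contractTo_mem_quotient, fun a b hab => ?_,
    fun a b hsab => ?_⟩
  · by_cases hX_ab : f a ∈ X ∧ f b ∈ X
    · exact hfX hX_ab.1 hX_ab.2
    · exact hf_inj (eq_of_contractTo_eq hv hX_ab hab)
  · exact hX.rel_contractTo hr hv (not_both a b (hs.ne_of_rel hsab)) (hf a b hsab)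

end ContractTo

theorem hfree_iff_quotient_and_part_general {V W : Type*}
    (r : V → V → Prop) (s : W → W → Prop)
    (hG : IsTournament r) (hH : IsTournament s) (hHp : IsPrime s)
    (X : Set V) (hX : IsHomog r X) (v : V) (hv : v ∈ X) :
    ¬ CopyIn r s Set.univ ↔
      (¬ CopyIn r s ((Set.univ \ X) ∪ {v}) ∧ ¬ CopyIn r s X) := by
  refine ⟨fun h => ⟨fun hq => h (hq.mono (Set.subset_univ _)),
    fun hp => h (hp.mono (Set.subset_univ _))⟩, ?_⟩
  rintro ⟨hquot, hpart⟩ ⟨f, -, hf_inj, hf⟩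
  rcases hHp _ (hX.preimage hG hH hf) with hsub | huniv
  · exact hquot (copyIn_quotient_of_subsingleton_preimage hG hH hX hv hf_inj hf hsub)
  · exact hpart ⟨f, fun a => show a ∈ f ⁻¹' X from huniv ▸ Set.mem_univ a, hf_inj, hf⟩

/-- For prime H and a nonempty homogeneous set X of G, G is H-free iff
G/X and G[X] are both H-free. -/
theorem hfree_iff_quotient_and_part {V W : Type*} [Fintype V] [Fintype W]
    (r : V → V → Prop) (s : W → W → Prop)
    (hG : IsTournament r) (hH : IsTournament s) (hHp : IsPrime s)
    (X : Set V) (hX : IsHomog r X) (v : V) (hv : v ∈ X) :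
    ¬ CopyIn r s Set.univ ↔
      (¬ CopyIn r s ((Set.univ \ X) ∪ {v}) ∧ ¬ CopyIn r s X) :=
  hfree_iff_quotient_and_part_general r s hG hH hHp X hX v hv
end

section
/- The tournament T_n is prime for every odd n ≥ 1. -/
/-- The tournament T_n: vertices v_1,...,v_n (here indices 0,...,n-1), with
v_i → v_j iff j - i ≡ 1, ..., (n-1)/2 (mod n). -/
def Tn (n : ℕ) (i j : Fin n) : Prop :=
  1 ≤ (j.val + n - i.val) % n ∧ (j.val + n - i.val) % n ≤ (n - 1) / 2

/-! If `X` is a nontrivial proper homogeneous set of `T_{2m+1}`, walking around the cycle gives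
`a ∈ X` with `a + 1 ∉ X`. As `a → a + 1`, homogeneity forces `X → a + 1`, so `X` lies in the arc
`a - m + 1, …, a`. Then `v = a + m` lies outside `X`, is beaten by `a` and beats every other vertex
of that arc, contradicting homogeneity. -/

theorem IsHomog.forall_rel_of_rel {V : Type*} {r : V → V → Prop} {X : Set V}
    (hX : IsHomog r X) (hr : ∀ u v, r u v → ¬ r v u) {a w : V} (ha : a ∈ X) (hw : w ∉ X)
    (haw : r a w) : ∀ x ∈ X, r x w :=
  (hX w hw).resolve_left fun h => hr a w haw (h a ha)

open Fin.NatCast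

theorem Fin.exists_mem_add_one_notMem {n : ℕ} [NeZero n] {X : Set (Fin n)} {x w : Fin n}
    (hx : x ∈ X) (hw : w ∉ X) : ∃ a ∈ X, a + 1 ∉ X := by
  by_contra! hclosed
  have hmem : ∀ k : ℕ, x + k ∈ X := by
    intro k
    induction k with
    | zero => simpa using hx
    | succ k ih => simpa [add_assoc] using hclosed _ ih
  exact hw (by simpa using hmem (w - x).val)

namespace Tn

variable {m : ℕ}

theorem iff_val {i j : Fin (2 * m + 1)} :
    Tn (2 * m + 1) i j ↔ (i.val < j.val ∧ j.val ≤ i.val + m) ∨ j.val + m + 1 ≤ i.val := by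
  have hi := i.isLt
  have hj := j.isLt
  unfold Tn
  rcases lt_or_ge (j.val + (2 * m + 1) - i.val) (2 * m + 1) with h | h
  · rw [Nat.mod_eq_of_lt h]; omega
  · rw [Nat.mod_eq_sub_mod h, Nat.mod_eq_of_lt (by omega)]; omega

theorem asymm {i j : Fin (2 * m + 1)} (h : Tn (2 * m + 1) i j) : ¬ Tn (2 * m + 1) j i := by
  rw [iff_val] at *
  omega

theorem val_half : ((m : ℕ) : Fin (2 * m + 1)).val = m := by
  rw [Fin.val_natCast, Nat.mod_eq_of_lt (by omega)]

theorem self_add_one (hm : 1 ≤ m) (a : Fin (2 * m + 1)) : Tn (2 * m + 1) a (a + 1) := by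
  rw [iff_val, Fin.val_add_one]
  split_ifs with h
  · rw [h, Fin.val_last]; omega
  · omega

theorem self_add_half (hm : 1 ≤ m) (a : Fin (2 * m + 1)) : Tn (2 * m + 1) a (a + m) := by
  have ha := a.isLt
  rw [iff_val, Fin.val_add_eq_ite, val_half]
  split_ifs <;> omega

theorem not_add_half_add_one (a : Fin (2 * m + 1)) : ¬ Tn (2 * m + 1) (a + m) (a + 1) := by
  have ha := a.isLt
  rw [iff_val, Fin.val_add_eq_ite, val_half, Fin.val_add_one]
  split_ifs <;> simp only [Fin.ext_iff, Fin.val_last] at * <;> omega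

theorem add_half_of_ne_of_add_one {a c : Fin (2 * m + 1)} (hca : c ≠ a)
    (h : Tn (2 * m + 1) c (a + 1)) : Tn (2 * m + 1) (a + m) c := by
  have ha := a.isLt
  have hc := c.isLt
  rw [Ne, Fin.ext_iff] at hca
  rw [iff_val, Fin.val_add_one] at h
  rw [iff_val, Fin.val_add_eq_ite, val_half]
  split_ifs at * <;> simp only [Fin.ext_iff, Fin.val_last] at * <;> omega

end Tn

theorem Tn_prime_general (n : ℕ) (hodd : Odd n) : IsPrime (Tn n) := by
  obtain ⟨m, rfl⟩ := hodd
  rcases Nat.eq_zero_or_pos m with rfl | hm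
  · exact fun X _ => Or.inl (Set.subsingleton_of_subsingleton (α := Fin 1))
  intro X hX
  refine or_iff_not_imp_left.2 fun hX_nontrivial => ?_
  rw [Set.not_subsingleton_iff] at hX_nontrivial
  by_contra hX_ne_univ
  obtain ⟨x, hx⟩ := hX_nontrivial.nonempty
  obtain ⟨w, hw⟩ := (Set.ne_univ_iff_exists_notMem X).1 hX_ne_univ
  obtain ⟨a, ha, ha_succ⟩ := Fin.exists_mem_add_one_notMem hx hw
  obtain ⟨c, hc, hca⟩ := hX_nontrivial.exists_ne a
  have hX_to_succ : ∀ x ∈ X, Tn _ x (a + 1) :=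
    hX.forall_rel_of_rel (fun _ _ => Tn.asymm) ha ha_succ (Tn.self_add_one hm a)
  have hv : a + m ∉ X := fun hv => Tn.not_add_half_add_one a (hX_to_succ _ hv)
  exact Tn.asymm (Tn.add_half_of_ne_of_add_one hca (hX_to_succ c hc))
    (hX.forall_rel_of_rel (fun _ _ => Tn.asymm) ha hv (Tn.self_add_half hm a) c hc)

/-- T_n is prime for every odd n ≥ 1. -/
theorem Tn_prime (n : ℕ) (hodd : Odd n) (h1 : 1 ≤ n) : IsPrime (Tn n) :=
  Tn_prime_general n hodd
end

section
/- The tournament W_n is prime for every odd n ≥ 1. -/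
/-- The tournament W_n: vertex 0 is v, vertex k (1 ≤ k ≤ n-1) is w_k;
w_i → w_j for i < j, w_i → v for even i, v → w_i for odd i. -/
def Wn (n : ℕ) (i j : Fin n) : Prop :=
  if i.val = 0 then j.val % 2 = 1
  else if j.val = 0 then i.val % 2 = 0
  else i.val < j.val

theorem IsTournament.asymm_s6 {V : Type*} {r : V → V → Prop} (hr : IsTournament r) {a b : V}
    (hab : r a b) : ¬ r b a := by
  rcases eq_or_ne a b with rfl | hne
  · exact hr.1 a
  · exact (hr.2 a b hne).1 hab

theorem IsHomog.mem_of_rel_of_rel {V : Type*} {r : V → V → Prop} (hr : IsTournament r)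
    {X : Set V} (hX : IsHomog r X) {x y z : V} (hx : x ∈ X) (hy : y ∈ X) (hxz : r x z)
    (hzy : r z y) : z ∈ X := by
  by_contra hz
  rcases hX z hz with h | h
  · exact hr.asymm_s6 hxz (h x hx)
  · exact hr.asymm_s6 hzy (h y hy)

namespace Wn

variable {n : ℕ} {i j : Fin n}

theorem zero_left_iff (hi : i.val = 0) : Wn n i j ↔ j.val % 2 = 1 := by
  simp [Wn, hi]

theorem zero_right_iff (hi : i.val ≠ 0) (hj : j.val = 0) : Wn n i j ↔ i.val % 2 = 0 := by
  simp [Wn, hi, hj]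

theorem iff_lt (hi : i.val ≠ 0) (hj : j.val ≠ 0) : Wn n i j ↔ i.val < j.val := by
  simp [Wn, hi, hj]

theorem isTournament (n : ℕ) : IsTournament (Wn n) := by
  refine ⟨fun i => ?_, fun i j hij => ?_⟩
  · unfold Wn
    split_ifs <;> omega
  · have := Fin.val_ne_of_ne hij
    unfold Wn
    split_ifs <;> omega

variable {X : Set (Fin n)}

theorem subsingleton_of_zero_notMem (h0 : 0 < n) (hX : IsHomog (Wn n) X)
    (hv : (⟨0, h0⟩ : Fin n) ∉ X) : X.Subsingleton := by
  have hX0 : ∀ a ∈ X, a.val ≠ 0 := fun a ha h =>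
    hv ((Fin.ext h.symm : (⟨0, h0⟩ : Fin n) = a) ▸ ha)
  intro a ha b hb
  by_contra hab
  wlog hlt : a.val < b.val generalizing a b
  · exact this hb ha (Ne.symm hab) (by omega)
  have ha0 := hX0 a ha
  have hb0 := hX0 b hb
  let c : Fin n := ⟨a.val + 1, by omega⟩
  have hc : c.val = a.val + 1 := rfl
  have hc0 : c.val ≠ 0 := by omega
  have hcX : c ∈ X := by
    rcases eq_or_ne c b with hcb | hcb
    · exact hcb ▸ hb
    · have := Fin.val_ne_of_ne hcb
      refine hX.mem_of_rel_of_rel (isTournament n) ha hb ?_ ?_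
      · exact (iff_lt ha0 hc0).2 (by omega)
      · exact (iff_lt hc0 hb0).2 (by omega)
  rcases hX _ hv with h | h
  · have := (zero_left_iff rfl).1 (h a ha)
    have := (zero_left_iff rfl).1 (h c hcX)
    omega
  · have := (zero_right_iff ha0 rfl).1 (h a ha)
    have := (zero_right_iff hc0 rfl).1 (h c hcX)
    omega

theorem eq_univ_of_zero_mem (hn : Odd n) (h0 : 0 < n) (hX : IsHomog (Wn n) X)
    (hv : (⟨0, h0⟩ : Fin n) ∈ X) {w : Fin n} (hw : w ∈ X) (hw0 : w.val ≠ 0) : X = Set.univ := by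
  have hn2 := Nat.odd_iff.1 hn
  refine Set.eq_univ_of_forall fun c => ?_
  by_contra hc
  have hc0 : c.val ≠ 0 := fun h => hc ((Fin.ext h.symm : (⟨0, h0⟩ : Fin n) = c) ▸ hv)
  have trapped : ∀ x ∈ X, ∀ y ∈ X, Wn n x c → ¬ Wn n c y := fun x hx y hy hxc hcy =>
    hc (hX.mem_of_rel_of_rel (isTournament n) hx hy hxc hcy)
  have hcw : c.val ≠ w.val := fun h => hc (Fin.ext h ▸ hw)
  rcases Nat.mod_two_eq_zero_or_one c.val with hce | hco
  · have hcv : Wn n c ⟨0, h0⟩ := (zero_right_iff hc0 rfl).2 hce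
    have hlt : c.val < w.val := by
      by_contra
      exact trapped w hw _ hv ((iff_lt hw0 hc0).2 (by omega)) hcv
    let d : Fin n := ⟨c.val - 1, by omega⟩
    have hd : d.val = c.val - 1 := rfl
    have hd0 : d.val ≠ 0 := by omega
    have hdX : d ∈ X := hX.mem_of_rel_of_rel (isTournament n) hv hw
      ((zero_left_iff rfl).2 (by omega)) ((iff_lt hd0 hw0).2 (by omega))
    exact trapped d hdX _ hv ((iff_lt hd0 hc0).2 (by omega)) hcv
  · have hvc : Wn n ⟨0, h0⟩ c := (zero_left_iff rfl).2 hco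
    have hlt : w.val < c.val := by
      by_contra
      exact trapped _ hv w hw hvc ((iff_lt hc0 hw0).2 (by omega))
    let d : Fin n := ⟨c.val + 1, by omega⟩
    have hd : d.val = c.val + 1 := rfl
    have hd0 : d.val ≠ 0 := by omega
    have hdX : d ∈ X := hX.mem_of_rel_of_rel (isTournament n) hw hv
      ((iff_lt hw0 hd0).2 (by omega)) ((zero_right_iff hd0 rfl).2 (by omega))
    exact trapped _ hv d hdX hvc ((iff_lt hc0 hd0).2 (by omega))

end Wn

/-- W_n is prime for every odd n ≥ 1. -/
theorem Wn_prime (n : ℕ) (hodd : Odd n) (h1 : 1 ≤ n) : IsPrime (Wn n) := by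
  intro X hX
  by_cases hv : (⟨0, h1⟩ : Fin n) ∈ X
  · rcases X.subsingleton_or_nontrivial with hs | ⟨a, ha, b, hb, hab⟩
    · exact Or.inl hs
    obtain ⟨w, hw, hw0⟩ : ∃ w ∈ X, w.val ≠ 0 := by
      by_cases ha0 : a.val = 0
      · exact ⟨b, hb, fun hb0 => hab (Fin.ext (ha0.trans hb0.symm))⟩
      · exact ⟨a, ha, ha0⟩
    exact Or.inr (Wn.eq_univ_of_zero_mem hodd h1 hX hv hw hw0)
  · exact Or.inl (Wn.subsingleton_of_zero_notMem h1 hX hv)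
end

section
/- The tournaments T_n, U_n, and W_n are each isomorphic to their own duals, for every odd n ≥ 1. -/
/-- U_n: obtained from T_n by reversing all edges with both ends among the
first (n-1)/2 vertices. -/
def Un (n : ℕ) (i j : Fin n) : Prop :=
  if i.val < (n - 1) / 2 ∧ j.val < (n - 1) / 2 then Tn n j i else Tn n i j

/-!
Vertices are indexed by the cyclic group `Fin n`. Arcs of `T_n` depend only on `j - i`, so every
reflection `x ↦ c - x` reverses all of them.
For `U_n`, taking `c = (n - 1)/2 - 1` makes the reflection also preserve the block of the first
`(n - 1)/2` vertices whose internal arcs were reversed. For `W_n`, `x ↦ -x` fixes `v` and sends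
`w_k` to `w_{n-k}`: this reverses the linear order of the `w`'s and, `n` being odd, swaps the
parity of `k`, hence the direction of the arc between `v` and `w_k`.
-/

namespace Fin

variable {n : ℕ}

lemma val_sub_lt_iff_of_val_eq_pred (c x : Fin n) {m : ℕ} (hc : c.val = m - 1) :
    (c - x).val < m ↔ x.val < m := by
  rcases le_or_gt x c with h | h
  · have hval := sub_val_of_le h
    rw [le_iff_val_le_val] at h
    omega
  · have hval := coe_sub_iff_lt.mpr h
    have hx := x.isLt
    rw [lt_def] at h
    omega

end Fin

section SelfDual

variable {n : ℕ}

lemma Tn_iff_val_sub (i j : Fin n) :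
    Tn n i j ↔ 1 ≤ (j - i).val ∧ (j - i).val ≤ (n - 1) / 2 := by
  have hsub : j.val + n - i.val = n - i.val + j.val := by omega
  rw [Tn, Fin.val_sub, hsub]

variable [NeZero n]

lemma Tn_sub_left (c i j : Fin n) : Tn n i j ↔ Tn n (c - j) (c - i) := by
  rw [Tn_iff_val_sub, Tn_iff_val_sub, sub_sub_sub_cancel_left]

lemma Un_sub_left (c i j : Fin n)
    (hc : ∀ x : Fin n, (c - x).val < (n - 1) / 2 ↔ x.val < (n - 1) / 2) :
    Un n i j ↔ Un n (c - j) (c - i) := by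
  by_cases h : i.val < (n - 1) / 2 ∧ j.val < (n - 1) / 2
  · rw [Un, Un, if_pos h, if_pos ⟨(hc j).mpr h.2, (hc i).mpr h.1⟩]
    exact Tn_sub_left c j i
  · rw [Un, Un, if_neg h, if_neg fun h' => h ⟨(hc i).mp h'.2, (hc j).mp h'.1⟩]
    exact Tn_sub_left c i j

lemma Wn_neg (hodd : Odd n) (i j : Fin n) : Wn n i j ↔ Wn n (-j) (-i) := by
  have hn := Nat.odd_iff.mp hodd
  simp only [Wn, Fin.val_neg, Fin.ext_iff, Fin.val_zero]
  grind

end SelfDual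

theorem TUW_self_dual_general (n : ℕ) (hodd : Odd n) :
    (∃ e : Fin n ≃ Fin n, ∀ i j, Tn n i j ↔ Tn n (e j) (e i)) ∧
    (∃ e : Fin n ≃ Fin n, ∀ i j, Un n i j ↔ Un n (e j) (e i)) ∧
    (∃ e : Fin n ≃ Fin n, ∀ i j, Wn n i j ↔ Wn n (e j) (e i)) := by
  have hn := hodd.pos
  have : NeZero n := ⟨hn.ne'⟩
  let c : Fin n := ⟨(n - 1) / 2 - 1, by omega⟩
  exact ⟨⟨Equiv.subLeft 0, Tn_sub_left 0⟩,
    ⟨Equiv.subLeft c, fun i j =>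
      Un_sub_left c i j fun x => Fin.val_sub_lt_iff_of_val_eq_pred c x rfl⟩,
    ⟨Equiv.neg (Fin n), Wn_neg hodd⟩⟩

/-- T_n, U_n, and W_n are each isomorphic to their own duals, for every odd n ≥ 1. -/
theorem TUW_self_dual (n : ℕ) (hodd : Odd n) (h1 : 1 ≤ n) :
    (∃ e : Fin n ≃ Fin n, ∀ i j, Tn n i j ↔ Tn n (e j) (e i)) ∧
    (∃ e : Fin n ≃ Fin n, ∀ i j, Un n i j ↔ Un n (e j) (e i)) ∧
    (∃ e : Fin n ≃ Fin n, ∀ i j, Wn n i j ↔ Wn n (e j) (e i)) :=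
  TUW_self_dual_general n hodd
end

section
/- Let G be a tournament that is both T_5-free and U_5-free, let v ∈ V(G), and let C = {x, y, z} ⊆ V(G)\{v} be a cyclic triangle. If exactly one vertex of C is a successor of v, and u ∈ V(G)\{v} satisfies u → x, u → y, and u → z, then u is a predecessor of v. -/
/-- T_5: vertices 0,...,4 (v_k = k-1), with i → j iff j - i ≡ 1 or 2 (mod 5). -/
def T5 (i j : Fin 5) : Prop :=
  (j.val + 5 - i.val) % 5 = 1 ∨ (j.val + 5 - i.val) % 5 = 2

/-- U_5: obtained from T_5 by reversing the edge between v_1 and v_2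
(indices 0 and 1), so that v_2 → v_1. -/
def U5 (i j : Fin 5) : Prop :=
  if i = 0 ∧ j = 1 then False else if i = 1 ∧ j = 0 then True else T5 i j

/-- G (given by relation r) contains a copy of the tournament given by s. -/
def Copy {V W : Type*} (r : V → V → Prop) (s : W → W → Prop) : Prop :=
  ∃ f : W → V, Function.Injective f ∧ ∀ a b, s a b → r (f a) (f b)

/- If `v → u`, then `x, u, y, z, v`, where `x` is the successor of `v` on the triangle,
span a copy of `U5` in this order. The three cases of the hypothesis are cyclic rotations
of the triangle. -/

theorem Copy.of_hom {V W : Type*} {r : V → V → Prop} {s : W → W → Prop}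
    (hirr : ∀ v, ¬ r v v) (htot : ∀ a b, a ≠ b → s a b ∨ s b a)
    (f : W → V) (hf : ∀ a b, s a b → r (f a) (f b)) : Copy r s := by
  refine ⟨f, fun a b hab => by_contra fun hne => ?_, hf⟩
  rcases htot a b hne with h | h
  · exact hirr (f b) (hab ▸ hf a b h)
  · exact hirr (f a) (hab ▸ hf b a h)

theorem U5_total (a b : Fin 5) (h : a ≠ b) : U5 a b ∨ U5 b a := by
  revert a b; unfold U5 T5; decide

theorem copy_U5_of_edges {V : Type*} {r : V → V → Prop} (hirr : ∀ v, ¬ r v v)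
    {a0 a1 a2 a3 a4 : V}
    (e10 : r a1 a0) (e02 : r a0 a2) (e12 : r a1 a2) (e13 : r a1 a3)
    (e23 : r a2 a3) (e24 : r a2 a4) (e34 : r a3 a4) (e30 : r a3 a0)
    (e40 : r a4 a0) (e41 : r a4 a1) : Copy r U5 := by
  refine Copy.of_hom hirr U5_total ![a0, a1, a2, a3, a4] fun a b hab => ?_
  fin_cases a <;> fin_cases b <;> simp [U5, T5] at hab ⊢ <;> assumption

theorem copy_U5_of_beats_triangle {V : Type*} {r : V → V → Prop} (hirr : ∀ v, ¬ r v v)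
    {v x y z u : V} (hcyc : r x y ∧ r y z ∧ r z x) (hv : r v x ∧ r y v ∧ r z v)
    (hux : r u x) (huy : r u y) (huz : r u z) (hvu : r v u) : Copy r U5 :=
  copy_U5_of_edges hirr hux hcyc.1 huy huz hcyc.2.1 hv.2.1 hv.2.2 hcyc.2.2 hv.1 hvu

theorem pred_of_beats_triangle_general {V : Type*} (r : V → V → Prop)
    (hT : IsTournament r) (hU5 : ¬ Copy r U5)
    (v x y z u : V)
    (hcyc : r x y ∧ r y z ∧ r z x)
    (hone : (r v x ∧ r y v ∧ r z v) ∨ (r v y ∧ r x v ∧ r z v) ∨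
      (r v z ∧ r x v ∧ r y v))
    (huv : u ≠ v) (hux : r u x) (huy : r u y) (huz : r u z) :
    r u v := by
  by_contra hnot
  have hvu : r v u := (hT.2 v u huv.symm).mpr hnot
  obtain ⟨hxy, hyz, hzx⟩ := hcyc
  rcases hone with ⟨hvx, hyv, hzv⟩ | ⟨hvy, hxv, hzv⟩ | ⟨hvz, hxv, hyv⟩
  · exact hU5 (copy_U5_of_beats_triangle hT.1 ⟨hxy, hyz, hzx⟩ ⟨hvx, hyv, hzv⟩
      hux huy huz hvu)
  · exact hU5 (copy_U5_of_beats_triangle hT.1 ⟨hyz, hzx, hxy⟩ ⟨hvy, hzv, hxv⟩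
      huy huz hux hvu)
  · exact hU5 (copy_U5_of_beats_triangle hT.1 ⟨hzx, hxy, hyz⟩ ⟨hvz, hxv, hyv⟩
      huz hux huy hvu)

/-- Proposition (a): if exactly one vertex of a cyclic triangle C ⊆ V∖{v} is a
successor of v and u beats all of C, then u is a predecessor of v. -/
theorem pred_of_beats_triangle {V : Type*} (r : V → V → Prop)
    (hT : IsTournament r) (hT5 : ¬ Copy r T5) (hU5 : ¬ Copy r U5)
    (v x y z u : V) (hxv : x ≠ v) (hyv : y ≠ v) (hzv : z ≠ v)
    (hcyc : r x y ∧ r y z ∧ r z x)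
    (hone : (r v x ∧ r y v ∧ r z v) ∨ (r v y ∧ r x v ∧ r z v) ∨
      (r v z ∧ r x v ∧ r y v))
    (huv : u ≠ v) (hux : r u x) (huy : r u y) (huz : r u z) :
    r u v :=
  pred_of_beats_triangle_general r hT hU5 v x y z u hcyc hone huv hux huy huz
end

section
/- Let γ = log_3 2. If a, b, c are nonnegative real numbers with c = min(a, b, c) and a + b + c = n, then a^γ + b^γ ≥ n^γ. -/
/-!
Since `x ↦ x ^ γ` is concave on `[0, ∞)`, its increments over an interval of fixed length shrink
as the interval moves right. For `c ≤ b ≤ a` this gives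
`(a + b + c) ^ γ ≤ (a + 2 b) ^ γ ≤ a ^ γ + (3 b) ^ γ - b ^ γ = a ^ γ + b ^ γ`,
the last step because `3 ^ γ = 2`.
-/

open Real

theorem ConcaveOn.map_add_sub_map_le {𝕜 : Type*} [Field 𝕜] [LinearOrder 𝕜] [IsStrictOrderedRing 𝕜]
    {s : Set 𝕜} {f : 𝕜 → 𝕜} (hf : ConcaveOn 𝕜 s f) {x y d : 𝕜} (hx : x ∈ s) (hyd : y + d ∈ s)
    (hxy : x ≤ y) (hd : 0 ≤ d) : f (y + d) - f y ≤ f (x + d) - f x := by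
  have hyx : 0 ≤ y - x := sub_nonneg.2 hxy
  rcases (add_nonneg hyx hd).eq_or_lt with hL | hL
  · obtain rfl : y = x := by linarith
    obtain rfl : d = 0 := by linarith
    simp
  -- `y` and `x + d` are convex combinations of `x` and `y + d` with swapped weights
  have hsum : d / (y - x + d) + (y - x) / (y - x + d) = 1 := by
    field_simp; ring
  have hy := hf.2 hx hyd (div_nonneg hd hL.le) (div_nonneg hyx hL.le) hsum
  have hxd := hf.2 hx hyd (div_nonneg hyx hL.le) (div_nonneg hd hL.le) ((add_comm _ _).trans hsum)
  simp only [smul_eq_mul] at hy hxd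
  rw [show d / (y - x + d) * x + (y - x) / (y - x + d) * (y + d) = y by field_simp; ring] at hy
  rw [show (y - x) / (y - x + d) * x + d / (y - x + d) * (y + d) = x + d by field_simp; ring]
    at hxd
  linear_combination hy + hxd - (f x + f (y + d)) * hsum

theorem Real.rpow_add_two_mul_le {p : ℝ} (hp : 0 ≤ p) (h3 : (3 : ℝ) ^ p ≤ 2) {a b : ℝ}
    (hb : 0 ≤ b) (hba : b ≤ a) : (a + 2 * b) ^ p ≤ a ^ p + b ^ p := by
  have hp1 : p ≤ 1 := by
    rw [← rpow_le_rpow_left_iff (by norm_num : (1 : ℝ) < 3), rpow_one]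
    linarith
  have hinc := (concaveOn_rpow hp hp1).map_add_sub_map_le (Set.mem_Ici.2 hb)
    (Set.mem_Ici.2 (by linarith : (0 : ℝ) ≤ a + 2 * b)) hba (by linarith : (0 : ℝ) ≤ 2 * b)
  have h3b : (b + 2 * b) ^ p = 3 ^ p * b ^ p := by
    rw [show b + 2 * b = 3 * b by ring, mul_rpow (by norm_num) hb]
  have hsmall : (3 ^ p - 1) * b ^ p ≤ b ^ p :=
    mul_le_of_le_one_left (rpow_nonneg hb p) (by linarith)
  linarith

/-- If a, b, c ≥ 0 with c = min(a,b,c) and a + b + c = n, then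
a^γ + b^γ ≥ n^γ where γ = log_3 2. -/
theorem rpow_two_of_three (a b c n : ℝ) (ha : 0 ≤ a) (hb : 0 ≤ b) (hc : 0 ≤ c)
    (hmin : c = min a (min b c)) (hsum : a + b + c = n) :
    a ^ (Real.logb 3 2) + b ^ (Real.logb 3 2) ≥ n ^ (Real.logb 3 2) := by
  set γ := logb 3 2
  have hγ : 0 ≤ γ := logb_nonneg (by norm_num) (by norm_num)
  have h3 : (3 : ℝ) ^ γ ≤ 2 := (rpow_logb (by norm_num) (by norm_num) (by norm_num)).le
  obtain ⟨hca, hcb⟩ : c ≤ a ∧ c ≤ b := by simpa using hmin.le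
  subst hsum
  rcases le_total b a with hba | hab
  · calc (a + b + c) ^ γ ≤ (a + 2 * b) ^ γ := rpow_le_rpow (by positivity) (by linarith) hγ
      _ ≤ a ^ γ + b ^ γ := rpow_add_two_mul_le hγ h3 hb hba
  · calc (a + b + c) ^ γ ≤ (b + 2 * a) ^ γ := rpow_le_rpow (by positivity) (by linarith) hγ
      _ ≤ b ^ γ + a ^ γ := rpow_add_two_mul_le hγ h3 ha hab
      _ = a ^ γ + b ^ γ := add_comm _ _
end

section
/- Define tournaments G_n inductively by G_1 = T_3 (the cyclic triangle) and G_{n+1} = T_3(G_n, G_n, G_n), the tournament obtained by substituting a copy of G_n for each vertex of the cyclic triangle. Then G_n has 3^n vertices, is U_5-free, and contains no transitive subtournament with more than 2^n vertices. -/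
/-- The cyclic triangle T_3 on Fin 3. -/
def T3 (i j : Fin 3) : Prop := j = i + 1

/-- Vertex type of G_n: G_1 = T_3, G_{n+1} = T_3(G_n, G_n, G_n). -/
def GnV : ℕ → Type
  | 0 => PUnit
  | n + 1 => Fin 3 × GnV n

instance fintypeGnV : (n : ℕ) → Fintype (GnV n)
  | 0 => inferInstanceAs (Fintype PUnit)
  | n + 1 => letI := fintypeGnV n; inferInstanceAs (Fintype (Fin 3 × GnV n))

/-- Edge relation of G_n: within a copy, recurse; across copies, follow T_3. -/
def GnR : (n : ℕ) → GnV n → GnV n → Prop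
  | 0, _, _ => False
  | n + 1, (a, u), (b, v) => if a = b then GnR n u v else T3 a b

/-!
G_{n+1} is the substitution T_3(G_n, G_n, G_n). Since U_5 is prime (it has no nontrivial
homogeneous set), every copy of U_5 in a substitution T_3(H, H, H) lies inside a single copy
of H, so by induction it would lie in G_0, a single vertex. A transitive set in T_3(H, H, H)
meets at most two of the three copies (one vertex in each copy spans a cyclic triangle), and
meets each copy in a transitive set of H, which doubles the bound at every step.
-/

open Finset

section Substitution

variable {κ ι β : Type*}

def subst [DecidableEq ι] (S : ι → ι → Prop) (R : β → β → Prop) (x y : ι × β) : Prop :=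
  if x.1 = y.1 then R x.2 y.2 else S x.1 y.1

/-- Between tournaments, an injective edge-preserving map is an isomorphism onto an induced
subtournament. -/
def Embeds (P : κ → κ → Prop) (R : β → β → Prop) : Prop :=
  ∃ f : κ → β, Function.Injective f ∧ ∀ i j, P i j → R (f i) (f j)

def CyclicTriangleFree (R : β → β → Prop) (s : Finset β) : Prop :=
  ∀ a ∈ s, ∀ b ∈ s, ∀ c ∈ s, ¬ (R a b ∧ R b c ∧ R c a)

variable [DecidableEq ι] {S : ι → ι → Prop} {R : β → β → Prop}

theorem subst_of_fst_eq {x y : ι × β} (h : x.1 = y.1) : subst S R x y ↔ R x.2 y.2 := by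
  rw [subst, if_pos h]

theorem subst_of_fst_ne {x y : ι × β} (h : x.1 ≠ y.1) : subst S R x y ↔ S x.1 y.1 := by
  rw [subst, if_neg h]

theorem Embeds.of_subst {P : κ → κ → Prop}
    (hP : ∀ g : κ → ι, (∀ i j, P i j → g i ≠ g j → S (g i) (g j)) → ∀ i j, g i = g j)
    (h : Embeds P (subst S R)) : Embeds P R := by
  obtain ⟨f, hinj, hedge⟩ := h
  have hfst : ∀ i j, (f i).1 = (f j).1 :=
    hP _ fun i j hij hne => (subst_of_fst_ne hne).mp (hedge i j hij)
  exact ⟨fun i => (f i).2, fun i j h => hinj (Prod.ext (hfst i j) h),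
    fun i j hij => (subst_of_fst_eq (hfst i j)).mp (hedge i j hij)⟩

theorem CyclicTriangleFree.image_snd_fiber [DecidableEq β] {s : Finset (ι × β)}
    (hs : CyclicTriangleFree (subst S R) s) (a : ι) :
    CyclicTriangleFree R ({x ∈ s | x.1 = a}.image Prod.snd) := by
  intro _ hu _ hv _ hw
  obtain ⟨x, hx, rfl⟩ := mem_image.mp hu
  obtain ⟨y, hy, rfl⟩ := mem_image.mp hv
  obtain ⟨z, hz, rfl⟩ := mem_image.mp hw
  obtain ⟨hxs, rfl⟩ := mem_filter.mp hx
  obtain ⟨hys, hya⟩ := mem_filter.mp hy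
  obtain ⟨hzs, hza⟩ := mem_filter.mp hz
  have := hs x hxs y hys z hzs
  rwa [subst_of_fst_eq hya.symm, subst_of_fst_eq (hya.trans hza.symm),
    subst_of_fst_eq hza] at this

theorem CyclicTriangleFree.card_fiber_le {s : Finset (ι × β)}
    (hs : CyclicTriangleFree (subst S R) s) {m : ℕ}
    (hR : ∀ t : Finset β, CyclicTriangleFree R t → t.card ≤ m) (a : ι) :
    #{x ∈ s | x.1 = a} ≤ m := by
  classical
  rw [← card_image_of_injOn fun x hx y hy hxy =>
    Prod.ext ((mem_filter.mp hx).2.trans (mem_filter.mp hy).2.symm) hxy]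
  exact hR _ (hs.image_snd_fiber a)

end Substitution

set_option maxRecDepth 10000 in
/-- A nonconstant such map would make its fibres nontrivial homogeneous sets of `U5`, which is
prime. -/
theorem U5_hom_T3_const : ∀ g : Fin 5 → Fin 3,
    (∀ i j, U5 i j → g i ≠ g j → T3 (g i) (g j)) → ∀ i j, g i = g j := by
  unfold U5 T5 T3
  decide

theorem CyclicTriangleFree.card_image_fst_le_two {β : Type*} {R : β → β → Prop}
    {s : Finset (Fin 3 × β)} (hs : CyclicTriangleFree (subst T3 R) s) :
    #(s.image Prod.fst) ≤ 2 := by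
  suffices ∃ a, a ∉ s.image Prod.fst by
    obtain ⟨a, ha⟩ := this
    exact Nat.le_of_lt_succ (by simpa using card_lt_univ_of_notMem ha)
  by_contra! hall
  obtain ⟨x, hx, hx0⟩ := mem_image.mp (hall 0)
  obtain ⟨y, hy, hy1⟩ := mem_image.mp (hall 1)
  obtain ⟨z, hz, hz2⟩ := mem_image.mp (hall 2)
  refine hs x hx y hy z hz ⟨?_, ?_, ?_⟩ <;>
    rw [subst_of_fst_ne (by simp [*])] <;> simp [T3, *]

theorem CyclicTriangleFree.card_le_two_mul {β : Type*} {R : β → β → Prop} {m : ℕ}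
    (hR : ∀ t : Finset β, CyclicTriangleFree R t → t.card ≤ m)
    {s : Finset (Fin 3 × β)} (hs : CyclicTriangleFree (subst T3 R) s) :
    s.card ≤ m * 2 :=
  calc s.card ≤ m * #(s.image Prod.fst) :=
        card_le_mul_card_image s m fun a _ => hs.card_fiber_le hR a
    _ ≤ m * 2 := Nat.mul_le_mul_left m hs.card_image_fst_le_two

theorem card_GnV (n : ℕ) : Fintype.card (GnV n) = 3 ^ n := by
  induction n with
  | zero => rfl
  | succ n ih =>
    have : Fintype.card (GnV (n + 1)) = Fintype.card (Fin 3 × GnV n) := rfl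
    rw [this, Fintype.card_prod, Fintype.card_fin, ih, pow_succ, mul_comm]

theorem not_embeds_U5_GnR (n : ℕ) : ¬ Embeds U5 (GnR n) := by
  induction n with
  | zero =>
    rintro ⟨f, hinj, -⟩
    exact absurd (hinj rfl : (0 : Fin 5) = 1) (by decide)
  | succ n ih =>
    exact fun h => ih (Embeds.of_subst U5_hom_T3_const h)

theorem card_le_of_cyclicTriangleFree_GnR (n : ℕ) (s : Finset (GnV n))
    (hs : CyclicTriangleFree (GnR n) s) : s.card ≤ 2 ^ n := by
  induction n with
  | zero => exact s.card_le_univ.trans (card_GnV 0).le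
  | succ n ih =>
    rw [pow_succ]
    exact CyclicTriangleFree.card_le_two_mul ih hs

theorem Gn_properties_general (n : ℕ) :
    Fintype.card (GnV n) = 3 ^ n ∧
    (¬ ∃ f : Fin 5 → GnV n, Function.Injective f ∧
        ∀ i j, U5 i j → GnR n (f i) (f j)) ∧
    ∀ S : Finset (GnV n), (∀ a ∈ S, ∀ b ∈ S, ∀ c ∈ S,
        ¬ (GnR n a b ∧ GnR n b c ∧ GnR n c a)) → S.card ≤ 2 ^ n :=
  ⟨card_GnV n, not_embeds_U5_GnR n, card_le_of_cyclicTriangleFree_GnR n⟩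

/-- G_n has 3^n vertices, is U_5-free, and has no transitive subtournament with
more than 2^n vertices. -/
theorem Gn_properties (n : ℕ) (hn : 1 ≤ n) :
    Fintype.card (GnV n) = 3 ^ n ∧
    (¬ ∃ f : Fin 5 → GnV n, Function.Injective f ∧
        ∀ i j, U5 i j → GnR n (f i) (f j)) ∧
    ∀ S : Finset (GnV n), (∀ a ∈ S, ∀ b ∈ S, ∀ c ∈ S,
        ¬ (GnR n a b ∧ GnR n b c ∧ GnR n c a)) → S.card ≤ 2 ^ n :=
  Gn_properties_general n
end
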